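/- arXiv:2110.09381 — 6 statements merged into one kernel-verified Lean document; each statement's English description precedes it below -/
import Mathlib

section
/- Let A and B be monoidal categories with A rigid, and let F : A → B be a strong monoidal functor. Then F is faithful if and only if F separates morphisms with domain the unit object, i.e. for every object X of A and every pair of morphisms f, g : 𝟙 → X in A, F(f) = F(g) implies f = g. -/
open CategoryTheory MonoidalCategory

namespace CategoryTheory.Functor

variable {C D : Type*} [Category C] [MonoidalCategory C] [Category D] [MonoidalCategory D]

/-- Transposing `f : X ⟶ Y` along an exact pairing `(X, X')` to a morphism `𝟙_ C ⟶ Y ⊗ X'`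
is injective, and the image of the transpose under `F` only depends on `F.map f`. -/
theorem map_injective_of_exactPairing (F : C ⥤ D) [F.Monoidal] {X X' Y : C}
    [ExactPairing X X'] (hY : ∀ u v : 𝟙_ C ⟶ Y ⊗ X', F.map u = F.map v → u = v) :
    Function.Injective (F.map : (X ⟶ Y) → (F.obj X ⟶ F.obj Y)) := by
  intro f g hfg
  let transpose : (X ⟶ Y) → (𝟙_ C ⟶ Y ⊗ X') :=
    fun φ ↦ tensorRightHomEquiv (𝟙_ C) X X' Y ((λ_ X).hom ≫ φ)
  have map_transpose : F.map (transpose f) = F.map (transpose g) := by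
    simp only [transpose, tensorRightHomEquiv, Equiv.coe_fn_mk, F.map_comp,
      Monoidal.map_whiskerRight, hfg]
  have transpose_eq := (tensorRightHomEquiv (𝟙_ C) X X' Y).injective (hY _ _ map_transpose)
  exact (cancel_epi _).mp transpose_eq

end CategoryTheory.Functor

/-- **Lemma 1 of Kahn, "Exactness and faithfulness of monoidal functors"** (domain case).
Let `A`, `B` be monoidal categories with `A` rigid, and `F : A ⥤ B` a strong monoidal
functor. Then `F` is faithful iff it separates morphisms with domain the unit object. -/
theorem faithful_iff_separates_from_unit
    {A : Type*} [Category A] [MonoidalCategory A] [RigidCategory A]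
    {B : Type*} [Category B] [MonoidalCategory B]
    (F : A ⥤ B) [F.Monoidal] :
    F.Faithful ↔ ∀ (X : A) (f g : 𝟙_ A ⟶ X), F.map f = F.map g → f = g :=
  ⟨fun _ _ _ _ hfg ↦ F.map_injective hfg,
    fun h ↦ ⟨fun {X _} ↦ F.map_injective_of_exactPairing (X' := Xᘁ) (h _)⟩⟩
end

section
/- Let A and B be abelian monoidal categories whose tensor products are additive in each variable, with A rigid, and let F : A → B be an additive strong monoidal functor. Assume that the unit object of B is not a zero object, that the endomorphism ring End_A(𝟙) of the unit object of A is a field, and that F preserves monomorphisms. Then F is faithful. -/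
open CategoryTheory CategoryTheory.Limits MonoidalCategory

section Aux

variable {A : Type*} [Category A] [Abelian A] [MonoidalCategory A] [MonoidalPreadditive A]
  [RigidCategory A]

/-- Whiskering on the left preserves epimorphisms (rigid category). -/
private lemma aux_epi_whiskerLeft (T : A) {P Q : A} (e : P ⟶ Q) [Epi e] : Epi (T ◁ e) := by
  have : (tensorLeft T).PreservesEpimorphisms :=
    Functor.preservesEpimorphisms_of_adjunction (tensorLeftAdjunction (ᘁT) T)
  exact this.preserves (f := e)

/-- Whiskering on the left preserves monomorphisms (rigid category). -/
private lemma aux_mono_whiskerLeft (T : A) {P Q : A} (m : P ⟶ Q) [Mono m] : Mono (T ◁ m) := by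
  have : (tensorLeft T).PreservesMonomorphisms :=
    Functor.preservesMonomorphisms_of_adjunction (tensorLeftAdjunction T (Tᘁ))
  exact this.preserves (f := m)

/-- Whiskering on the right preserves epimorphisms (rigid category). -/
private lemma aux_epi_whiskerRight {P Q : A} (e : P ⟶ Q) [Epi e] (T : A) : Epi (e ▷ T) := by
  have : (tensorRight T).PreservesEpimorphisms :=
    Functor.preservesEpimorphisms_of_adjunction (tensorRightAdjunction T (Tᘁ))
  exact this.preserves (f := e)

/-- Whiskering on the right preserves monomorphisms (rigid category). -/
private lemma aux_mono_whiskerRight {P Q : A} (m : P ⟶ Q) [Mono m] (T : A) : Mono (m ▷ T) := by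
  have : (tensorRight T).PreservesMonomorphisms :=
    Functor.preservesMonomorphisms_of_adjunction (tensorRightAdjunction (ᘁT) T)
  exact this.preserves (f := m)

private lemma aux_unit_tensor {X Z : A} (f : X ⟶ 𝟙_ A) (g : 𝟙_ A ⟶ Z) :
    (X ◁ g) ≫ (f ▷ Z) = (ρ_ X).hom ≫ f ≫ g ≫ (λ_ Z).inv := by
  rw [whisker_exchange]
  have h1 : f ▷ (𝟙_ A) = (ρ_ X).hom ≫ f ≫ (ρ_ (𝟙_ A)).inv := by
    rw [← MonoidalCategory.rightUnitor_naturality]; simp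
  have h2 : (𝟙_ A) ◁ g = (λ_ (𝟙_ A)).hom ≫ g ≫ (λ_ Z).inv := by
    rw [← MonoidalCategory.leftUnitor_naturality]; simp
  rw [h1, h2, unitors_equal]
  simp

private lemma aux_equiv_zero {X Y Y' Z : A} [ExactPairing Y Y'] :
    (tensorRightHomEquiv X Y Y' Z) 0 = 0 := by
  simp [tensorRightHomEquiv]

private lemma aux_equiv_symm_zero {X Y Y' Z : A} [ExactPairing Y Y'] :
    (tensorRightHomEquiv X Y Y' Z).symm 0 = 0 := by
  simp [tensorRightHomEquiv]

/-- Deligne–Milne Prop. 1.17 (key step): in a rigid abelian monoidal category whose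
endomorphism ring of the unit is a field, any epimorphism from the unit onto a
nonzero object is a monomorphism. -/
private lemma aux_mono_of_epi_from_unit (hA : IsField (End (𝟙_ A)))
    {W : A} (q : 𝟙_ A ⟶ W) [Epi q] (hW : ¬ IsZero W) : Mono q := by
  set U := kernel q with hU
  set u := kernel.ι q with hu
  -- Step 1 : U ⊗ W ≅ 0
  have h1 : (U ◁ q) ≫ (u ▷ W) = 0 := by
    rw [aux_unit_tensor u q]
    simp [hu, kernel.condition_assoc]
  have hepi1 : Epi (U ◁ q) := aux_epi_whiskerLeft U q
  have huW : u ▷ W = 0 := by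
    haveI := hepi1
    exact zero_of_epi_comp (U ◁ q) h1
  have hzUW : IsZero (U ⊗ W) := by
    have hm : Mono (u ▷ W) := aux_mono_whiskerRight u W
    rw [huW] at hm
    haveI := hm
    exact IsZero.of_mono_zero (U ⊗ W) (𝟙_ A ⊗ W)
  -- Step 2 : the mate `h : Wᘁ ⟶ 𝟙` of `q` is a monomorphism
  set h : (Wᘁ : A) ⟶ 𝟙_ A := (ρ_ (Wᘁ : A)).inv ≫ ((Wᘁ : A) ◁ q) ≫ ε_ W (Wᘁ) with hh
  have hmono_h : Mono h := by
    refine Preadditive.mono_of_cancel_zero _ (fun {T} g hg => ?_)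
    have e1 : g ≫ h = (ρ_ T).inv ≫ (T ◁ q) ≫ (g ▷ W) ≫ ε_ W (Wᘁ) := by
      rw [hh]
      have n1 : g ≫ (ρ_ (Wᘁ : A)).inv = (ρ_ T).inv ≫ (g ▷ 𝟙_ A) := by simp
      rw [← Category.assoc, n1, Category.assoc, ← whisker_exchange_assoc]
    rw [e1] at hg
    have hg2 : (T ◁ q) ≫ ((g ▷ W) ≫ ε_ W (Wᘁ)) = 0 := by
      have := congrArg (fun x => (ρ_ T).hom ≫ x) hg
      simpa using this
    
    haveI : Epi (T ◁ q) := aux_epi_whiskerLeft T q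
    have hg3 : (g ▷ W) ≫ ε_ W (Wᘁ) = 0 := zero_of_epi_comp (T ◁ q) hg2
    have e3 := tensorRightHomEquiv_whiskerRight_comp_evaluation (X := W) (f := g)
    rw [hg3, aux_equiv_zero] at e3
    have : g ≫ (λ_ (Wᘁ : A)).inv = 0 := e3.symm
    simpa using congrArg (fun x => x ≫ (λ_ (Wᘁ : A)).hom) this
  -- Step 3 : U ⊗ Wᘁ ≅ 0 (mixed vanishing)
  have hzUWd : IsZero (U ⊗ (Wᘁ : A)) := by
    have hz3 : IsZero ((U ⊗ (Wᘁ : A)) ⊗ W) := by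
      have z1 : IsZero (U ⊗ (𝟙_ A ⊗ W)) :=
        hzUW.of_iso (whiskerLeftIso U (λ_ W))
      haveI m1 : Mono (h ▷ W) := aux_mono_whiskerRight h W
      haveI m2 : Mono (U ◁ (h ▷ W)) := aux_mono_whiskerLeft U (h ▷ W)
      have z2 : IsZero (U ⊗ ((Wᘁ : A) ⊗ W)) := IsZero.of_mono (U ◁ (h ▷ W)) z1
      exact z2.of_iso (α_ U (Wᘁ : A) W)
    rw [IsZero.iff_id_eq_zero]
    apply (tensorRightHomEquiv (U ⊗ (Wᘁ : A)) W (Wᘁ : A) U).symm.injective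
    exact hz3.eq_of_src _ _
  -- Step 4 : q ▷ Wᘁ is an isomorphism
  haveI : PreservesLimits (tensorRight (Wᘁ : A)) :=
    (tensorRightAdjunction W (Wᘁ)).rightAdjoint_preservesLimits
  have hk : IsZero (kernel ((tensorRight (Wᘁ : A)).map q)) :=
    hzUWd.of_iso (PreservesKernel.iso (tensorRight (Wᘁ : A)) q).symm
  haveI hmono4 : Mono (q ▷ (Wᘁ : A)) :=
    Preadditive.mono_of_isZero_kernel ((tensorRight (Wᘁ : A)).map q) hk
  haveI hepi4 : Epi (q ▷ (Wᘁ : A)) := aux_epi_whiskerRight q (Wᘁ : A)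
  haveI : IsIso (q ▷ (Wᘁ : A)) := isIso_of_mono_of_epi _
  -- Step 5 : the coevaluation of W is nonzero
  have hcoev : η_ W (Wᘁ) ≠ 0 := by
    intro hc0
    apply hW
    have e5 := ExactPairing.evaluation_coevaluation (X := W) (Y := (Wᘁ : A))
    rw [hc0] at e5
    simp only [MonoidalPreadditive.zero_whiskerRight, zero_comp] at e5
    have : 𝟙 (𝟙_ A ⊗ W) = 0 := by
      have := congrArg (fun x => x ≫ (ρ_ W).hom ≫ (λ_ W).inv) e5.symm
      simpa using this
    have hz : IsZero (𝟙_ A ⊗ W) := (IsZero.iff_id_eq_zero _).2 this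
    exact hz.of_iso (λ_ W).symm
  -- Step 6 : construct a nonzero map `s : W ⟶ 𝟙`
  set t : 𝟙_ A ⟶ 𝟙_ A ⊗ (Wᘁ : A) := η_ W (Wᘁ) ≫ inv (q ▷ (Wᘁ : A)) with hts
  have ht : t ≠ 0 := by
    intro h0
    apply hcoev
    have : η_ W (Wᘁ) = t ≫ (q ▷ (Wᘁ : A)) := by rw [hts]; simp
    rw [this, h0, zero_comp]
  set s : W ⟶ 𝟙_ A := (λ_ W).inv ≫ (tensorRightHomEquiv (𝟙_ A) W (Wᘁ) (𝟙_ A)).symm t with hs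
  have hsne : s ≠ 0 := by
    intro h0
    apply ht
    have h1 : (tensorRightHomEquiv (𝟙_ A) W (Wᘁ) (𝟙_ A)).symm t = 0 := by
      have := congrArg (fun x => (λ_ W).hom ≫ x) h0
      simpa [hs] using this
    have := congrArg (tensorRightHomEquiv (𝟙_ A) W (Wᘁ) (𝟙_ A)) h1
    rwa [Equiv.apply_symm_apply, aux_equiv_zero] at this
  -- Step 7 : use the field structure to split q
  set c : End (𝟙_ A) := q ≫ s with hc
  have hqs : c ≠ 0 := fun h0 => hsne (zero_of_epi_comp q h0)
  obtain ⟨b, hb⟩ := hA.mul_inv_cancel hqs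
  have hsplit : q ≫ (s ≫ b) = 𝟙 (𝟙_ A) := by
    have h1 : b * c = 1 := by rw [hA.mul_comm]; exact hb
    rw [End.mul_def] at h1
    rw [hc] at h1
    rw [← Category.assoc]
    exact h1
  haveI : IsSplitMono q := IsSplitMono.mk' ⟨s ≫ b, hsplit⟩
  infer_instance

end Aux

/-- **Corollary 2 of Kahn, "Exactness and faithfulness of monoidal functors"**
(monomorphism case). Let `A`, `B` be abelian monoidal categories with biadditive tensor
products, `A` rigid, `𝟙_B` nonzero, `End_A(𝟙)` a field. If the additive strong monoidal
functor `F : A ⥤ B` preserves monomorphisms, then it is faithful. -/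
theorem faithful_of_preserves_mono_abelian
    {A : Type*} [Category A] [Abelian A] [MonoidalCategory A] [MonoidalPreadditive A]
    [RigidCategory A]
    {B : Type*} [Category B] [Abelian B] [MonoidalCategory B] [MonoidalPreadditive B]
    (F : A ⥤ B) [F.Monoidal] [F.Additive]
    (hB : ¬ IsZero (𝟙_ B))
    (hA : IsField (End (𝟙_ A)))
    (h2 : ∀ ⦃X Y : A⦄ (f : X ⟶ Y), Mono f → Mono (F.map f)) :
    F.Faithful := by
  -- Main step: a global morphism killed by `F` is zero.
  have key : ∀ {Z : A} (g : 𝟙_ A ⟶ Z), F.map g = 0 → g = 0 := by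
    intro Z g hg
    by_contra hne
    have hfac : factorThruImage g ≫ image.ι g = g := image.fac g
    have hW : ¬ IsZero (image g) := by
      intro hz
      exact hne (by rw [← hfac, hz.eq_zero_of_tgt (factorThruImage g), zero_comp])
    haveI : Mono (factorThruImage g) := aux_mono_of_epi_from_unit hA (factorThruImage g) hW
    haveI hmg : Mono g := by rw [← hfac]; exact mono_comp _ _
    have hFg : Mono (F.map g) := h2 g hmg
    have hz : IsZero (F.obj (𝟙_ A)) := by
      rw [hg] at hFg
      haveI := hFg
      exact IsZero.of_mono_zero (F.obj (𝟙_ A)) (F.obj Z)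
    exact hB (hz.of_iso (Functor.Monoidal.εIso F))
  -- Deduce faithfulness via "names" of morphisms.
  refine ⟨fun {X Y} {f f'} hff' => ?_⟩
  rw [← sub_eq_zero]
  set d := f - f' with hd
  have hFd : F.map d = 0 := by
    rw [hd, F.map_sub, hff', sub_self]
  set g := (tensorRightHomEquiv (𝟙_ A) X (Xᘁ) Y) ((λ_ X).hom ≫ d) with hgdef
  have hFg : F.map g = 0 := by
    have hg1 : g = (ρ_ (𝟙_ A)).inv ≫ ((𝟙_ A) ◁ η_ X (Xᘁ)) ≫ (α_ (𝟙_ A) X (Xᘁ)).inv ≫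
        (((λ_ X).hom ≫ d) ▷ (Xᘁ : A)) := rfl
    rw [hg1, comp_whiskerRight]
    rw [Functor.map_comp, Functor.map_comp, Functor.map_comp, Functor.map_comp]
    rw [Functor.Monoidal.map_whiskerRight F d (Xᘁ : A), hFd]
    simp
  have hgz : g = 0 := key g hFg
  have : (λ_ X).hom ≫ d = 0 := by
    have h3 : (tensorRightHomEquiv (𝟙_ A) X (Xᘁ) Y).symm g = (λ_ X).hom ≫ d := by
      rw [hgdef, Equiv.symm_apply_apply]
    rw [hgz, aux_equiv_symm_zero] at h3
    exact h3.symm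
  have hd0 : d = 0 := by
    have := congrArg (fun x => (λ_ X).inv ≫ x) this
    simpa using this
  exact hd0
end

section
/- Let A and B be abelian monoidal categories whose tensor products are additive in each variable, with A rigid, and let F : A → B be an additive strong monoidal functor. Assume that the unit object of B is not a zero object, that the endomorphism ring End_A(𝟙) of the unit object of A is a field, and that F preserves epimorphisms. Then F is faithful. -/
set_option linter.unusedSectionVars false


open CategoryTheory CategoryTheory.Limits MonoidalCategory

noncomputable section

namespace KahnFaithfulAux

variable {A : Type*} [Category A] [Abelian A] [MonoidalCategory A] [MonoidalPreadditive A]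
  [RigidCategory A]

/-- Tensoring on the left preserves epimorphisms (rigid preadditive setting). -/
lemma epi_whiskerLeft_aux (X : A) {Y Z : A} (f : Y ⟶ Z) [Epi f] : Epi (X ◁ f) := by
  haveI : (tensorLeft X).PreservesEpimorphisms :=
    Functor.preservesEpimorphisms_of_adjunction (tensorLeftAdjunction (ᘁX) X)
  exact inferInstanceAs (Epi ((tensorLeft X).map f))

/-- Tensoring on the left preserves monomorphisms. -/
lemma mono_whiskerLeft_aux (X : A) {Y Z : A} (f : Y ⟶ Z) [Mono f] : Mono (X ◁ f) := by
  haveI : (tensorLeft X).PreservesMonomorphisms :=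
    Functor.preservesMonomorphisms_of_adjunction (tensorLeftAdjunction X (Xᘁ))
  exact inferInstanceAs (Mono ((tensorLeft X).map f))

/-- Tensoring on the right preserves epimorphisms. -/
lemma epi_whiskerRight_aux {Y Z : A} (f : Y ⟶ Z) [Epi f] (X : A) : Epi (f ▷ X) := by
  haveI : (tensorRight X).PreservesEpimorphisms :=
    Functor.preservesEpimorphisms_of_adjunction (tensorRightAdjunction X (Xᘁ))
  exact inferInstanceAs (Epi ((tensorRight X).map f))

/-- Tensoring on the right preserves monomorphisms. -/
lemma mono_whiskerRight_aux {Y Z : A} (f : Y ⟶ Z) [Mono f] (X : A) : Mono (f ▷ X) := by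
  haveI : (tensorRight X).PreservesMonomorphisms :=
    Functor.preservesMonomorphisms_of_adjunction (tensorRightAdjunction (ᘁX) X)
  exact inferInstanceAs (Mono ((tensorRight X).map f))

/-- If a mono composed with an epi through the unit is zero, the tensor product of the
source of the mono with the target of the epi is zero. -/
lemma isZero_tensor_of_comp_zero {W C0 : A} (a : W ⟶ 𝟙_ A) (b : 𝟙_ A ⟶ C0) [Mono a] [Epi b]
    (h : a ≫ b = 0) : IsZero (W ⊗ C0) := by
  have h1 : (W ◁ b) ≫ (a ▷ C0) = 0 := by
    calc (W ◁ b) ≫ (a ▷ C0) = a ▷ (𝟙_ A) ≫ (𝟙_ A) ◁ b := whisker_exchange a b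
      _ = ((ρ_ W).hom ≫ a ≫ (ρ_ (𝟙_ A)).inv) ≫ ((λ_ (𝟙_ A)).hom ≫ b ≫ (λ_ C0).inv) := by
          rw [MonoidalCategory.whiskerRight_id, MonoidalCategory.id_whiskerLeft]
      _ = (ρ_ W).hom ≫ a ≫ ((ρ_ (𝟙_ A)).inv ≫ (ρ_ (𝟙_ A)).hom) ≫ b ≫ (λ_ C0).inv := by
          rw [unitors_equal]; simp only [Category.assoc]
      _ = (ρ_ W).hom ≫ (a ≫ b) ≫ (λ_ C0).inv := by simp
      _ = 0 := by rw [h]; simp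
  haveI := epi_whiskerLeft_aux W b
  have h2 : a ▷ C0 = 0 := zero_of_epi_comp (W ◁ b) h1
  haveI := mono_whiskerRight_aux a C0
  rw [IsZero.iff_id_eq_zero]
  apply (cancel_mono (a ▷ C0)).mp
  rw [h2]; simp

/-- If `Z ⊗ ᘁU` is zero then every map `Z ⟶ U` vanishes. -/
lemma hom_eq_zero_of_isZero_tensor_leftDual {Z U : A} (hz : IsZero (Z ⊗ (ᘁU : A)))
    (w : Z ⟶ U) : w = 0 := by
  have h := hz.eq_of_src ((tensorRightHomEquiv Z (ᘁU : A) U (𝟙_ A)).symm (w ≫ (λ_ U).inv)) 0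
  have h2 := congrArg (tensorRightHomEquiv Z (ᘁU : A) U (𝟙_ A)) h
  rw [Equiv.apply_symm_apply] at h2
  have h3 : (tensorRightHomEquiv Z (ᘁU : A) U (𝟙_ A)) 0 = 0 := by
    simp [tensorRightHomEquiv]
  rw [h3] at h2
  simpa using congrArg (· ≫ (λ_ U).hom) h2

/-- The left adjoint mate of a monomorphism into the unit is an epimorphism. -/
lemma epi_leftAdjointMate_of_mono {U : A} (u : U ⟶ 𝟙_ A) [Mono u] : Epi (ᘁu) := by
  apply Preadditive.epi_of_cancel_zero
  intro B d hd
  have h1 : η_ (ᘁU : A) U ≫ ((ᘁU : A) ◁ u) ≫ (d ▷ (𝟙_ A)) = 0 := by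
    rw [← coevaluation_comp_leftAdjointMate_assoc u]
    rw [← comp_whiskerRight, hd]
    simp
  have h2 : η_ (ᘁU : A) U ≫ (d ▷ U) ≫ (B ◁ u) = 0 := by
    rw [← whisker_exchange]
    exact h1
  haveI := mono_whiskerLeft_aux B u
  rw [← Category.assoc] at h2
  have h3 : η_ (ᘁU : A) U ≫ (d ▷ U) = 0 := zero_of_comp_mono (B ◁ u) h2
  have h4 := tensorRightHomEquiv_symm_coevaluation_comp_whiskerRight (Y' := U) (f := d)
  rw [h3] at h4
  have h5 : (λ_ (ᘁU : A)).hom ≫ d = 0 := by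
    rw [← h4]; simp [tensorRightHomEquiv]
  calc d = (λ_ (ᘁU : A)).inv ≫ ((λ_ (ᘁU : A)).hom ≫ d) := by simp
    _ = 0 := by rw [h5]; simp

/-- The left adjoint mate of an epimorphism out of the unit is a monomorphism. -/
lemma mono_leftAdjointMate_of_epi {V : A} (q : 𝟙_ A ⟶ V) [Epi q] : Mono (ᘁq) := by
  apply Preadditive.mono_of_cancel_zero
  intro B g hg
  have h1 : (q ▷ B) ≫ ((V ◁ g) ≫ ε_ (ᘁV : A) V) = 0 := by
    rw [← Category.assoc, ← whisker_exchange q g, Category.assoc,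
      ← leftAdjointMate_comp_evaluation q, ← Category.assoc, ← MonoidalCategory.whiskerLeft_comp, hg]
    simp
  haveI := epi_whiskerRight_aux q B
  have h2 : (V ◁ g) ≫ ε_ (ᘁV : A) V = 0 := zero_of_epi_comp (q ▷ B) h1
  have h3 := tensorLeftHomEquiv_whiskerLeft_comp_evaluation (Z := V) g
  rw [h2] at h3
  have h4 : g ≫ (ρ_ (ᘁV : A)).inv = 0 := by
    rw [← h3]; simp [tensorLeftHomEquiv]
  simpa using congrArg (· ≫ (ρ_ (ᘁV : A)).hom) h4

/-- **Deligne–Milne, Prop. 1.17 (non-symmetric version).**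
In a rigid abelian monoidal category with `End 𝟙` a field,
every nonzero monomorphism into the unit object is an isomorphism. -/
theorem isIso_of_mono_to_unit (hA : IsField (End (𝟙_ A))) {U : A} (u : U ⟶ 𝟙_ A) [Mono u]
    (hu : u ≠ 0) : IsIso u := by
  set V : A := cokernel u with hVdef
  set q : 𝟙_ A ⟶ V := cokernel.π u with hqdef
  haveI : Epi q := by rw [hqdef]; infer_instance
  -- the mate of u, as a map out of the unit
  obtain ⟨p, hp⟩ : ∃ p : 𝟙_ A ⟶ (ᘁU : A), p = ᘁu := ⟨ᘁu, rfl⟩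
  haveI hpepi : Epi p := by rw [hp]; exact epi_leftAdjointMate_of_mono u
  -- the mate of q, as a map into the unit
  obtain ⟨j, hj⟩ : ∃ j : (ᘁV : A) ⟶ 𝟙_ A, j = ᘁq := ⟨ᘁq, rfl⟩
  haveI hjmono : Mono j := by rw [hj]; exact mono_leftAdjointMate_of_epi q
  -- j ≫ p = 0
  have hjp : j ≫ p = 0 := by
    rw [hj, hp]
    have h1 : (ᘁq) ≫ (ᘁu) = ᘁ(u ≫ q) := (comp_leftAdjointMate).symm
    have h2 : u ≫ q = 0 := cokernel.condition u
    rw [h2] at h1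
    have h3 : (ᘁ(0 : U ⟶ V)) = 0 := by simp [leftAdjointMate]
    exact h1.trans h3
  -- kernel of p
  have hKU : IsZero (kernel p ⊗ (ᘁU : A)) :=
    isZero_tensor_of_comp_zero (kernel.ι p) p (kernel.condition p)
  -- u ≫ p is mono
  have hupmono : Mono (u ≫ p) := by
    set T := kernel (u ≫ p) with hT
    set κ : T ⟶ U := kernel.ι (u ≫ p) with hκ
    have hκ0 : κ ≫ u ≫ p = 0 := kernel.condition (u ≫ p)
    have hcond : (κ ≫ u) ≫ p = 0 := by simpa using hκ0
    have hlift : kernel.lift p (κ ≫ u) hcond ≫ kernel.ι p = κ ≫ u := kernel.lift_ι _ _ _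
    haveI : Mono (κ ≫ u) := mono_comp κ u
    haveI htmono : Mono (kernel.lift p (κ ≫ u) hcond) := mono_of_mono_fac hlift
    haveI := mono_whiskerRight_aux (kernel.lift p (κ ≫ u) hcond) (ᘁU : A)
    have hzero : (kernel.lift p (κ ≫ u) hcond) ▷ (ᘁU : A) = 0 := hKU.eq_of_tgt _ 0
    have hTzero : IsZero (T ⊗ (ᘁU : A)) := by
      rw [IsZero.iff_id_eq_zero]
      apply (cancel_mono ((kernel.lift p (κ ≫ u) hcond) ▷ (ᘁU : A))).mp
      rw [hzero]; simp
    have hκzero : κ = 0 := hom_eq_zero_of_isZero_tensor_leftDual hTzero κ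
    apply Preadditive.mono_of_cancel_zero
    intro B g hg
    have : g = kernel.lift (u ≫ p) g hg ≫ κ := (kernel.lift_ι _ _ _).symm
    rw [this, hκzero, comp_zero]
  -- p ▷ U is mono
  have hpU : Mono (p ▷ U) := by
    have hcomp : (p ▷ U) ≫ ((ᘁU : A) ◁ u)
        = (λ_ U).hom ≫ (u ≫ p) ≫ (ρ_ (ᘁU : A)).inv := by
      rw [← whisker_exchange p u]
      rw [MonoidalCategory.id_whiskerLeft, MonoidalCategory.whiskerRight_id]
      rw [← unitors_equal]
      simp
    haveI : Mono ((p ▷ U) ≫ ((ᘁU : A) ◁ u)) := by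
      rw [hcomp]
      haveI := hupmono
      infer_instance
    exact mono_of_mono (p ▷ U) ((ᘁU : A) ◁ u)
  -- kernel p ⊗ U is zero
  have hKUzero : IsZero (kernel p ⊗ U) := by
    have h1 : (kernel.ι p ▷ U) ≫ (p ▷ U) = 0 := by
      rw [← comp_whiskerRight, kernel.condition]; simp
    have h2 : kernel.ι p ▷ U = 0 := zero_of_comp_mono (p ▷ U) h1
    haveI := mono_whiskerRight_aux (kernel.ι p) U
    rw [IsZero.iff_id_eq_zero]
    apply (cancel_mono (kernel.ι p ▷ U)).mp
    rw [h2]; simp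
  -- ᘁV ⊗ U is zero
  have hVU : IsZero ((ᘁV : A) ⊗ U) := by
    have hlift : kernel.lift p j hjp ≫ kernel.ι p = j := kernel.lift_ι _ _ _
    haveI : Mono (kernel.lift p j hjp) := mono_of_mono_fac hlift
    haveI := mono_whiskerRight_aux (kernel.lift p j hjp) U
    have hzero : (kernel.lift p j hjp) ▷ U = 0 := hKUzero.eq_of_tgt _ 0
    rw [IsZero.iff_id_eq_zero]
    apply (cancel_mono ((kernel.lift p j hjp) ▷ U)).mp
    rw [hzero]; simp
  -- ᘁV ◁ q is an isomorphism
  haveI hVq : IsIso ((ᘁV : A) ◁ q) := by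
    haveI : Epi ((ᘁV : A) ◁ q) := epi_whiskerLeft_aux _ q
    haveI : Mono ((ᘁV : A) ◁ q) := by
      apply Preadditive.mono_of_cancel_zero
      intro B g hg
      have h1 : (tensorLeftHomEquiv B (ᘁV : A) V V)
          (((tensorLeftHomEquiv B (ᘁV : A) V (𝟙_ A)).symm g) ≫ q) = 0 := by
        rw [tensorLeftHomEquiv_naturality, Equiv.apply_symm_apply, hg]
      have h2 : ((tensorLeftHomEquiv B (ᘁV : A) V (𝟙_ A)).symm g) ≫ q = 0 := by
        have h0 : (tensorLeftHomEquiv B (ᘁV : A) V V) 0 = 0 := by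
          simp [tensorLeftHomEquiv]
        apply (tensorLeftHomEquiv B (ᘁV : A) V V).injective
        rw [h1, h0]
      -- factor through the kernel of q, i.e. through u
      have h3 : ((tensorLeftHomEquiv B (ᘁV : A) V (𝟙_ A)).symm g) ≫ cokernel.π u = 0 := h2
      have h4 := Abelian.monoLift_comp u _ h3
      -- g = equiv (monoLift ≫ u)
      have h5 : g = (tensorLeftHomEquiv B (ᘁV : A) V (𝟙_ A))
          ((Abelian.monoLift u _ h3) ≫ u) := by
        rw [h4, Equiv.apply_symm_apply]
      rw [h5, tensorLeftHomEquiv_naturality]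
      have h6 : (tensorLeftHomEquiv B (ᘁV : A) V U) (Abelian.monoLift u _ h3) = 0 :=
        hVU.eq_of_tgt _ 0
      rw [h6, zero_comp]
    exact isIso_of_mono_of_epi _
  -- construct a section of q
  set φ : 𝟙_ A ⟶ (ᘁV : A) ⊗ V := (tensorLeftHomEquiv (𝟙_ A) (ᘁV : A) V V) (ρ_ V).hom with hφ
  set s₀ : V ⊗ 𝟙_ A ⟶ 𝟙_ A :=
    (tensorLeftHomEquiv (𝟙_ A) (ᘁV : A) V (𝟙_ A)).symm (φ ≫ inv ((ᘁV : A) ◁ q)) with hs₀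
  have hs₀q : s₀ ≫ q = (ρ_ V).hom := by
    apply (tensorLeftHomEquiv (𝟙_ A) (ᘁV : A) V V).injective
    rw [tensorLeftHomEquiv_naturality, hs₀, Equiv.apply_symm_apply, Category.assoc,
      IsIso.inv_hom_id, Category.comp_id, hφ]
  set s : V ⟶ 𝟙_ A := (ρ_ V).inv ≫ s₀ with hs
  have hsq : s ≫ q = 𝟙 V := by rw [hs, Category.assoc, hs₀q]; simp
  -- the idempotent e = q ≫ s in the field End(𝟙)
  set e : End (𝟙_ A) := q ≫ s with he
  have heid : e ≫ e = e := by
    calc e ≫ e = q ≫ (s ≫ q) ≫ s := by rw [he]; simp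
      _ = e := by rw [hsq]; simp [he]
  by_cases h0 : e = 0
  · -- V = 0, so u is epi
    have h1V : 𝟙 V = 0 := by
      calc 𝟙 V = (s ≫ q) ≫ (s ≫ q) := by rw [hsq]; simp
        _ = s ≫ e ≫ q := by rw [he]; simp
        _ = 0 := by rw [h0]; simp
    have hq0 : cokernel.π u = 0 := by
      calc cokernel.π u = q := by rw [hqdef]
        _ = q ≫ 𝟙 V := by simp
        _ = 0 := by rw [h1V]; simp
    haveI : Epi u := Preadditive.epi_of_cokernel_zero hq0
    exact isIso_of_mono_of_epi u
  · -- e is a nonzero idempotent in a field, hence e = 1, contradicting u ≠ 0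
    exfalso
    obtain ⟨b, hb⟩ := hA.mul_inv_cancel h0
    have hee : e * e = e := by rw [End.mul_def]; exact heid
    have he1 : e = 1 := by
      calc e = e * 1 := (mul_one e).symm
        _ = e * (e * b) := by rw [hb]
        _ = (e * e) * b := (mul_assoc e e b).symm
        _ = e * b := by rw [hee]
        _ = 1 := hb
    have hu0 : u = 0 := by
      calc u = u ≫ 𝟙 (𝟙_ A) := by simp
        _ = u ≫ e := by rw [show e = 𝟙 (𝟙_ A) from he1]
        _ = (u ≫ q) ≫ s := by rw [he]; simp
        _ = 0 := by rw [hqdef, cokernel.condition]; simp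
    exact hu hu0

/-- Every nonzero morphism into the unit object is an epimorphism. -/
theorem epi_of_nonzero_to_unit (hA : IsField (End (𝟙_ A))) {Z : A} (g : Z ⟶ 𝟙_ A)
    (hg : g ≠ 0) : Epi g := by
  have hfac : Abelian.factorThruImage g ≫ Abelian.image.ι g = g := Abelian.image.fac g
  have hι : Abelian.image.ι g ≠ 0 := by
    intro h
    apply hg
    rw [← hfac, h, comp_zero]
  haveI : IsIso (Abelian.image.ι g) := isIso_of_mono_to_unit hA _ hι
  rw [← hfac]
  infer_instance

end KahnFaithfulAux

end

open KahnFaithfulAux in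
/-- **Corollary 2 of Kahn, "Exactness and faithfulness of monoidal functors"**
(epimorphism case). Let `A`, `B` be abelian monoidal categories with biadditive tensor
products, `A` rigid, `𝟙_B` nonzero, `End_A(𝟙)` a field. If the additive strong monoidal
functor `F : A ⥤ B` preserves epimorphisms, then it is faithful. -/
theorem faithful_of_preserves_epi_abelian
    {A : Type*} [Category A] [Abelian A] [MonoidalCategory A] [MonoidalPreadditive A]
    [RigidCategory A]
    {B : Type*} [Category B] [Abelian B] [MonoidalCategory B] [MonoidalPreadditive B]
    (F : A ⥤ B) [F.Monoidal] [F.Additive]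
    (hB : ¬ IsZero (𝟙_ B))
    (hA : IsField (End (𝟙_ A)))
    (h2 : ∀ ⦃X Y : A⦄ (f : X ⟶ Y), Epi f → Epi (F.map f)) :
    F.Faithful := by
  have key : ∀ {X Y : A} (f : X ⟶ Y), F.map f = 0 → f = 0 := by
    intro X Y f hf
    by_contra hne
    -- the mate of f, a morphism into the unit
    set g : (Yᘁ : A) ⊗ X ⟶ 𝟙_ A :=
      (tensorLeftHomEquiv X Y (Yᘁ : A) (𝟙_ A)).symm (f ≫ (ρ_ Y).inv) with hgdef
    have hg0 : g ≠ 0 := by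
      intro h
      apply hne
      have h1 := congrArg (tensorLeftHomEquiv X Y (Yᘁ : A) (𝟙_ A)) h
      rw [hgdef] at h1
      rw [Equiv.apply_symm_apply] at h1
      have h0 : (tensorLeftHomEquiv X Y (Yᘁ : A) (𝟙_ A)) 0 = 0 := by
        simp [tensorLeftHomEquiv]
      rw [h0] at h1
      simpa using congrArg (· ≫ (ρ_ Y).hom) h1
    have hepi : Epi g := epi_of_nonzero_to_unit hA g hg0
    have hFepi : Epi (F.map g) := h2 g hepi
    have hFg : F.map g = 0 := by
      have hz : F.map ((Yᘁ : A) ◁ (f ≫ (ρ_ Y).inv)) = 0 := by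
        rw [Functor.Monoidal.map_whiskerLeft, F.map_comp, hf]
        simp
      have hgexp : g = ((Yᘁ : A) ◁ (f ≫ (ρ_ Y).inv)) ≫
          ((α_ (Yᘁ : A) Y (𝟙_ A)).inv ≫ (ε_ Y (Yᘁ : A) ▷ (𝟙_ A)) ≫ (λ_ (𝟙_ A)).hom) := by
        rw [hgdef]
        simp [tensorLeftHomEquiv]
      rw [hgexp, F.map_comp, hz, zero_comp]
    have hzero : IsZero (F.obj (𝟙_ A)) := by
      rw [IsZero.iff_id_eq_zero]
      apply zero_of_epi_comp (F.map g)
      rw [hFg, zero_comp]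
    exact hB (hzero.of_iso (Functor.Monoidal.εIso F))
  refine ⟨fun {X Y} => ?_⟩
  intro f g h
  have hsub : F.map (f - g) = 0 := by rw [F.map_sub, h, sub_self]
  have := key _ hsub
  exact sub_eq_zero.mp this
end

section
/- Let C be a rigid abelian braided monoidal category whose tensor product is additive in each variable, and suppose that the endomorphism ring End(𝟙) of the unit object is a field. Then C is integral: for any morphisms f : A → A' and g : B → B' in C, if f ⊗ g = 0 then f = 0 or g = 0. -/
/-!
To see that `𝟙` is simple, let `m : U ⟶ 𝟙` be a nonzero subobject with cokernel `q`. Then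
`U ◁ q = 0`, so `ε_U` factors through `m`, which makes `m ▷ Uᘁ`, and through the braiding
`Uᘁ ◁ m`, an isomorphism. Transposing `(Uᘁ ◁ m)⁻¹ ≫ ε_U` gives a retraction `r` of `m`; then
`r ≫ m` is a nonzero element of the field `End 𝟙`, hence invertible, and `m` is an isomorphism.

Since `𝟙` is simple, a nonzero coevaluation `𝟙 ⟶ Y ⊗ Yᘁ` is a monomorphism, and tensoring it
with `X` embeds `X` into `X ⊗ Y ⊗ Yᘁ`; so `X ⊗ Y = 0` forces `X = 0` or `Y = 0`. By exactness of
the tensor product, `f ⊗ g = 0` makes `image f ⊗ image g` vanish.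
-/

open CategoryTheory CategoryTheory.Limits MonoidalCategory

namespace RigidAbelian

section Rigid

variable {C : Type*} [Category C] [MonoidalCategory C]

instance mono_whiskerLeft (X : C) [HasRightDual X] {Y Z : C} (f : Y ⟶ Z) [Mono f] :
    Mono (X ◁ f) :=
  have := Functor.preservesMonomorphisms_of_adjunction (tensorLeftAdjunction X (Xᘁ))
  (tensorLeft X).map_mono f

instance epi_whiskerLeft (X : C) [HasLeftDual X] {Y Z : C} (f : Y ⟶ Z) [Epi f] :
    Epi (X ◁ f) :=
  have := Functor.preservesEpimorphisms_of_adjunction (tensorLeftAdjunction (ᘁX) X)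
  (tensorLeft X).map_epi f

instance mono_whiskerRight (X : C) [HasLeftDual X] {Y Z : C} (f : Y ⟶ Z) [Mono f] :
    Mono (f ▷ X) :=
  have := Functor.preservesMonomorphisms_of_adjunction (tensorRightAdjunction (ᘁX) X)
  (tensorRight X).map_mono f

instance epi_whiskerRight (X : C) [HasRightDual X] {Y Z : C} (f : Y ⟶ Z) [Epi f] :
    Epi (f ▷ X) :=
  have := Functor.preservesEpimorphisms_of_adjunction (tensorRightAdjunction X (Xᘁ))
  (tensorRight X).map_epi f

instance mono_tensorHom [RigidCategory C] {X X' Y Y' : C} (f : X ⟶ X') (g : Y ⟶ Y') [Mono f]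
    [Mono g] : Mono (f ⊗ₘ g) := by
  rw [MonoidalCategory.tensorHom_def]; infer_instance

instance epi_tensorHom [RigidCategory C] {X X' Y Y' : C} (f : X ⟶ X') (g : Y ⟶ Y') [Epi f]
    [Epi g] : Epi (f ⊗ₘ g) := by
  rw [MonoidalCategory.tensorHom_def]; infer_instance

lemma isSplitEpi_whiskerRight_of_evaluation_factors {U V : C} [HasRightDual U] (m : V ⟶ 𝟙_ C)
    (e : Uᘁ ⊗ U ⟶ V) (he : e ≫ m = ε_ U Uᘁ) : IsSplitEpi (m ▷ Uᘁ) :=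
  IsSplitEpi.mk' ⟨(λ_ _).hom ≫ (ρ_ _).inv ≫ Uᘁ ◁ η_ U Uᘁ ≫ (α_ _ _ _).inv ≫ e ▷ Uᘁ, by
    simp [← comp_whiskerRight, he]⟩

lemma isSplitMono_of_isIso_whiskerLeft {U : C} [HasRightDual U] (m : U ⟶ 𝟙_ C)
    [IsIso (Uᘁ ◁ m)] : IsSplitMono m :=
  IsSplitMono.mk' ⟨tensorLeftHomEquiv _ U Uᘁ _ (inv (Uᘁ ◁ m) ≫ ε_ U Uᘁ) ≫ (ρ_ U).hom, by
    have h : m ≫ tensorLeftHomEquiv _ U Uᘁ _ (inv (Uᘁ ◁ m) ≫ ε_ U Uᘁ) =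
        tensorLeftHomEquiv _ U Uᘁ _ (ε_ U Uᘁ) := by
      rw [← Equiv.symm_apply_eq, tensorLeftHomEquiv_symm_naturality, Equiv.symm_apply_apply,
        IsIso.hom_inv_id_assoc]
    rw [reassoc_of% h]
    simp [tensorLeftHomEquiv]⟩

end Rigid

section Preadditive

variable {C : Type*} [Category C] [Preadditive C]

lemma isIso_of_isSplitMono_of_isField {X U : C} (hX : IsField (End X)) (m : U ⟶ X)
    [IsSplitMono m] (hm : m ≠ 0) : IsIso m := by
  have hrm : (retraction m ≫ m : End X) ≠ 0 := fun h => hm <| by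
    rw [← Category.id_comp m, ← IsSplitMono.id m, Category.assoc, h, comp_zero]
  obtain ⟨b, hb⟩ := hX.mul_inv_cancel hrm
  have : IsSplitEpi m := IsSplitEpi.mk' ⟨b ≫ retraction m, by simpa using hb⟩
  exact isIso_of_mono_of_isSplitEpi m

variable [MonoidalCategory C]

lemma tensorHom_eq_zero_of_comp_eq_zero {U Q : C} (m : U ⟶ 𝟙_ C) (q : 𝟙_ C ⟶ Q)
    (h : m ≫ q = 0) : m ⊗ₘ q = 0 := by
  have : m ⊗ₘ q = (ρ_ U).hom ≫ (m ≫ q) ≫ (λ_ Q).inv := by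
    simp [MonoidalCategory.tensorHom_def, ← unitors_inv_equal]
  rw [this, h, zero_comp, comp_zero]

variable [MonoidalPreadditive C]

lemma tensorLeftHomEquiv_zero (X Y Y' Z : C) [ExactPairing Y Y'] :
    tensorLeftHomEquiv X Y Y' Z 0 = 0 := by
  simp [tensorLeftHomEquiv]

lemma evaluation_comp_eq_zero {U Q : C} [HasRightDual U] (q : 𝟙_ C ⟶ Q) (h : U ◁ q = 0) :
    ε_ U Uᘁ ≫ q = 0 :=
  (tensorLeftHomEquiv _ U Uᘁ Q).injective <| by
    rw [tensorLeftHomEquiv_naturality, h, comp_zero, tensorLeftHomEquiv_zero]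

lemma isZero_of_coevaluation_eq_zero {U : C} [HasRightDual U] (h : η_ U Uᘁ = 0) : IsZero U := by
  have := ExactPairing.evaluation_coevaluation U Uᘁ
  rw [h, MonoidalPreadditive.zero_whiskerRight, zero_comp, eq_comm] at this
  rw [IsZero.iff_id_eq_zero]
  calc 𝟙 U = (λ_ U).inv ≫ ((λ_ U).hom ≫ (ρ_ U).inv) ≫ (ρ_ U).hom := by simp
    _ = 0 := by rw [this, zero_comp, comp_zero]

end Preadditive

section Abelian

variable {C : Type*} [Category C] [Abelian C] [MonoidalCategory C] [RigidCategory C]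

lemma isZero_image_tensorObj_image_of_tensorHom_eq_zero {A A' B B' : C} (f : A ⟶ A') (g : B ⟶ B')
    (h : f ⊗ₘ g = 0) : IsZero (image f ⊗ image g) :=
  IsZero.of_mono_eq_zero (image.ι f ⊗ₘ image.ι g) <|
    zero_of_epi_comp (factorThruImage f ⊗ₘ factorThruImage g) <| by
      rw [tensorHom_comp_tensorHom, image.fac, image.fac, h]

variable [MonoidalPreadditive C]

lemma isIso_whiskerRight_of_mono_to_unit {U : C} (m : U ⟶ 𝟙_ C) [Mono m] : IsIso (m ▷ Uᘁ) := by
  have hUq : U ◁ cokernel.π m = 0 := zero_of_comp_mono (m ▷ _) <| by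
    rw [← tensorHom_def', tensorHom_eq_zero_of_comp_eq_zero _ _ (cokernel.condition m)]
  have := isSplitEpi_whiskerRight_of_evaluation_factors m _
    (Abelian.monoLift_comp m _ (evaluation_comp_eq_zero _ hUq))
  exact isIso_of_mono_of_isSplitEpi _

lemma isIso_dual_whiskerLeft_of_mono_to_unit [BraidedCategory C] {U : C} (m : U ⟶ 𝟙_ C)
    [Mono m] : IsIso (Uᘁ ◁ m) := by
  have := isIso_whiskerRight_of_mono_to_unit m
  rw [← Iso.inv_hom_id_assoc (β_ U Uᘁ) (Uᘁ ◁ m), ← BraidedCategory.braiding_naturality_left]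
  infer_instance

lemma simple_unit [BraidedCategory C] (hC : IsField (End (𝟙_ C))) : Simple (𝟙_ C) where
  mono_isIso_iff_nonzero {U} m _ := by
    refine ⟨fun _ hm => ?_, fun hm => ?_⟩
    · have := hC.nontrivial
      subst hm
      exact one_ne_zero (α := End (𝟙_ C)) <| by
        rw [End.one_def, ← IsIso.inv_hom_id (0 : U ⟶ 𝟙_ C), comp_zero]
    · have := isIso_dual_whiskerLeft_of_mono_to_unit m
      have := isSplitMono_of_isIso_whiskerLeft m
      exact isIso_of_isSplitMono_of_isField hC m hm

lemma isZero_or_isZero_of_isZero_tensorObj [Simple (𝟙_ C)] {X Y : C} (h : IsZero (X ⊗ Y)) :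
    IsZero X ∨ IsZero Y := by
  refine or_iff_not_imp_right.2 fun hY => ?_
  have : Mono (η_ Y Yᘁ) :=
    mono_of_nonzero_from_simple fun h => hY (isZero_of_coevaluation_eq_zero h)
  have hXYY : IsZero (X ⊗ Y ⊗ Yᘁ) := ((tensorRight Yᘁ).map_isZero h).of_iso (α_ X Y Yᘁ).symm
  exact (IsZero.of_mono (X ◁ η_ Y Yᘁ) hXYY).of_iso (ρ_ X).symm

end Abelian

end RigidAbelian

open RigidAbelian

/-- **Remark r3 of Kahn, "Exactness and faithfulness of monoidal functors"** (integrality).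
A rigid abelian braided monoidal category with biadditive tensor product in which
`End(𝟙)` is a field is integral: `f ⊗ g = 0` implies `f = 0` or `g = 0`. -/
theorem integral_of_rigid_abelian
    {C : Type*} [Category C] [Abelian C] [MonoidalCategory C] [MonoidalPreadditive C]
    [BraidedCategory C] [RigidCategory C]
    (hC : IsField (End (𝟙_ C)))
    {A A' B B' : C} (f : A ⟶ A') (g : B ⟶ B') (h : f ⊗ₘ g = 0) :
    f = 0 ∨ g = 0 := by
  have := simple_unit hC
  refine (isZero_or_isZero_of_isZero_tensorObj
    (isZero_image_tensorObj_image_of_tensorHom_eq_zero f g h)).imp ?_ ?_ <;>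
  exact fun hI => eq_zero_of_image_eq_zero (hI.eq_of_src _ _)
end

section
/- Let C be a rigid abelian braided monoidal category whose tensor product is additive in each variable, and suppose that the endomorphism ring End(𝟙) of the unit object is a field. Then for any objects M and N of C, if M is not a zero object and N is not a zero object, then M ⊗ N is not a zero object. -/
open CategoryTheory CategoryTheory.Limits MonoidalCategory

namespace KahnR3Aux

variable {C : Type*} [Category C] [Abelian C] [MonoidalCategory C] [MonoidalPreadditive C]
  [BraidedCategory C] [RigidCategory C]

lemma isZero_tensor_of_isZero_right (Y : C) {X : C} (h : IsZero X) : IsZero (Y ⊗ X) := by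
  rw [IsZero.iff_id_eq_zero] at h ⊢
  calc 𝟙 (Y ⊗ X) = Y ◁ 𝟙 X := (MonoidalCategory.whiskerLeft_id Y X).symm
    _ = Y ◁ (0 : X ⟶ X) := by rw [h]
    _ = 0 := MonoidalPreadditive.whiskerLeft_zero

lemma isZero_tensor_of_isZero_left (Y : C) {X : C} (h : IsZero X) : IsZero (X ⊗ Y) := by
  rw [IsZero.iff_id_eq_zero] at h ⊢
  calc 𝟙 (X ⊗ Y) = 𝟙 X ▷ Y := (MonoidalCategory.id_whiskerRight X Y).symm
    _ = (0 : X ⟶ X) ▷ Y := by rw [h]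
    _ = 0 := MonoidalPreadditive.zero_whiskerRight

lemma epi_whiskerLeft' (X : C) {A B : C} (f : A ⟶ B) [Epi f] : Epi (X ◁ f) := by
  haveI : (tensorLeft X).PreservesEpimorphisms :=
    Functor.preservesEpimorphisms_of_adjunction (tensorLeftAdjunction (ᘁX) X)
  exact ((tensorLeft X).map_epi f : Epi ((tensorLeft X).map f))

lemma epi_whiskerRight' {A B : C} (f : A ⟶ B) [Epi f] (X : C) : Epi (f ▷ X) := by
  haveI : (tensorRight X).PreservesEpimorphisms :=
    Functor.preservesEpimorphisms_of_adjunction (tensorRightAdjunction X (Xᘁ))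
  exact ((tensorRight X).map_epi f : Epi ((tensorRight X).map f))

/-- If `u : K ⟶ L` is a mono which becomes zero after tensoring with `Z` on the right,
then the whiskering of `cokernel.π u` with `Z` is a mono. -/
lemma mono_whiskerRight_cokernelπ {K L : C} (u : K ⟶ L) [Mono u] (Z : C)
    (h : u ▷ Z = 0) : Mono (cokernel.π u ▷ Z) := by
  haveI : PreservesLimitsOfSize.{0, 0} (tensorRight Z) :=
    (tensorRightAdjunction (ᘁZ) Z).rightAdjoint_preservesLimits
  have hlim : IsLimit (KernelFork.ofι u (cokernel.condition u)) :=
    Abelian.monoIsKernelOfCokernel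
      (CokernelCofork.ofπ (cokernel.π u) (cokernel.condition u)) (cokernelIsCokernel u)
  have hlim2 := KernelFork.mapIsLimit _ hlim (tensorRight Z)
  refine Preadditive.mono_of_cancel_zero _ (fun {P} g hg => ?_)
  obtain ⟨l, hl⟩ := KernelFork.IsLimit.lift' hlim2 g (by exact hg)
  have : (((KernelFork.ofι u (cokernel.condition u)).map (tensorRight Z)).ι) = u ▷ Z := rfl
  rw [this, h] at hl
  exact hl.symm.trans comp_zero

/-- The key splitting result: in a rigid braided abelian monoidal category,
the cokernel projection of any monomorphism into the unit object is split. -/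
theorem exists_section_cokernelπ {K : C} (u : K ⟶ 𝟙_ C) [Mono u] :
    ∃ S : cokernel u ⟶ 𝟙_ C, S ≫ cokernel.π u = 𝟙 (cokernel u) := by
  set Q := cokernel u with hQdef
  set q : 𝟙_ C ⟶ Q := cokernel.π u with hqdef
  -- Step A : u ▷ Q = 0
  haveI hKq : Epi (K ◁ q) := epi_whiskerLeft' K q
  have hA : K ◁ q ≫ u ▷ Q = 0 := by
    rw [whisker_exchange u q]
    have h1 : u ▷ 𝟙_ C = (ρ_ K).hom ≫ u ≫ (ρ_ (𝟙_ C)).inv := by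
      rw [rightUnitor_inv_naturality]; simp
    have h2 : 𝟙_ C ◁ q = (λ_ (𝟙_ C)).hom ≫ q ≫ (λ_ Q).inv := by
      rw [← leftUnitor_naturality]; simp
    rw [h1, h2]
    have hcond : u ≫ q = 0 := cokernel.condition u
    simp [unitors_equal, reassoc_of% hcond]
  have huQ : u ▷ Q = 0 := by
    rw [← cancel_epi (K ◁ q), hA, comp_zero]
  haveI hmono_w : Mono (q ▷ Q) := mono_whiskerRight_cokernelπ u Q huQ
  haveI hepi_w : Epi (q ▷ Q) := epi_whiskerRight' q Q
  haveI hiso_w : IsIso (q ▷ Q) := isIso_of_mono_of_epi _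
  -- the factorization of the coevaluation of Q through q
  set φ : Q ⟶ Q ⊗ Qᘁ :=
    (ρ_ Q).inv ≫ Q ◁ η_ Q Qᘁ ≫ (α_ Q Q Qᘁ).inv ≫ inv (q ▷ Q) ▷ Qᘁ ≫ (λ_ Q).hom ▷ Qᘁ
    with hφdef
  have key : q ≫ (ρ_ Q).inv ≫ Q ◁ η_ Q Qᘁ ≫ (α_ Q Q Qᘁ).inv =
      η_ Q Qᘁ ≫ (λ_ Q).inv ▷ Qᘁ ≫ (q ▷ Q) ▷ Qᘁ := by
    rw [rightUnitor_inv_naturality_assoc, ← whisker_exchange_assoc,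
      associator_inv_naturality_left]
    rw [MonoidalCategory.id_whiskerLeft]
    simp only [Category.assoc, leftUnitor_tensor_inv]
    simp [unitors_equal]
  have hφ : q ≫ φ = η_ Q Qᘁ := by
    rw [hφdef]
    simp only [← Category.assoc]
    rw [show (((q ≫ (ρ_ Q).inv) ≫ Q ◁ η_ Q Qᘁ) ≫ (α_ Q Q Qᘁ).inv) =
      q ≫ (ρ_ Q).inv ≫ Q ◁ η_ Q Qᘁ ≫ (α_ Q Q Qᘁ).inv by simp only [Category.assoc]]
    rw [key]
    simp only [Category.assoc, ← comp_whiskerRight]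
    simp
  -- Qᘁ ◁ q is a split mono
  have hret : (Qᘁ ◁ q) ≫
      (Qᘁ ◁ φ ≫ (α_ Qᘁ Q Qᘁ).inv ≫ ε_ Q Qᘁ ▷ Qᘁ ≫ (λ_ Qᘁ).hom ≫ (ρ_ Qᘁ).inv) =
      𝟙 (Qᘁ ⊗ 𝟙_ C) := by
    rw [← MonoidalCategory.whiskerLeft_comp_assoc, hφ]
    rw [ExactPairing.coevaluation_evaluation_assoc]
    simp
  haveI : IsSplitMono (Qᘁ ◁ q) := IsSplitMono.mk' ⟨_, hret⟩
  have hQdu : Qᘁ ◁ u = 0 := by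
    have h0 : Qᘁ ◁ u ≫ Qᘁ ◁ q = 0 := by
      rw [← MonoidalCategory.whiskerLeft_comp, hqdef, cokernel.condition,
        MonoidalPreadditive.whiskerLeft_zero]
    rw [← cancel_mono (Qᘁ ◁ q), h0, zero_comp]
  have huQd : u ▷ Qᘁ = 0 := by
    have := BraidedCategory.braiding_naturality_left u Qᘁ
    -- u ▷ Qᘁ ≫ (β_ 𝟙 Qᘁ).hom = (β_ K Qᘁ).hom ≫ Qᘁ ◁ u
    rw [hQdu, comp_zero] at this
    rw [← Category.comp_id (u ▷ Qᘁ), ← Iso.hom_inv_id (β_ (𝟙_ C) Qᘁ),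
      ← Category.assoc, this, zero_comp]
  haveI : Mono (q ▷ Qᘁ) := mono_whiskerRight_cokernelπ u Qᘁ huQd
  haveI : Epi (q ▷ Qᘁ) := epi_whiskerRight' q Qᘁ
  haveI hiso2 : IsIso (q ▷ Qᘁ) := isIso_of_mono_of_epi _
  -- transfer across the adjunction
  set sh : 𝟙_ C ⟶ 𝟙_ C ⊗ Qᘁ :=
    (tensorRightHomEquiv (𝟙_ C) Q Qᘁ Q) (λ_ Q).hom ≫ inv (q ▷ Qᘁ) with hshdef
  set s : 𝟙_ C ⊗ Q ⟶ 𝟙_ C := (tensorRightHomEquiv (𝟙_ C) Q Qᘁ (𝟙_ C)).symm sh with hsdef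
  have hs : s ≫ q = (λ_ Q).hom := by
    apply (tensorRightHomEquiv (𝟙_ C) Q Qᘁ Q).injective
    rw [tensorRightHomEquiv_naturality, hsdef, Equiv.apply_symm_apply, hshdef,
      Category.assoc, IsIso.inv_hom_id, Category.comp_id]
  exact ⟨(λ_ Q).inv ≫ s, by rw [Category.assoc, hs, Iso.inv_hom_id]⟩

end KahnR3Aux

open KahnR3Aux

set_option maxHeartbeats 1000000 in
/-- **Remark r3 of Kahn, "Exactness and faithfulness of monoidal functors"** (objects).
In a rigid abelian braided monoidal category with biadditive tensor product in which
`End(𝟙)` is a field, the tensor product of two nonzero objects is nonzero. -/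
theorem tensorObj_ne_zero_of_rigid_abelian
    {C : Type*} [Category C] [Abelian C] [MonoidalCategory C] [MonoidalPreadditive C]
    [BraidedCategory C] [RigidCategory C]
    (hC : IsField (End (𝟙_ C)))
    (M N : C) (hM : ¬ IsZero M) (hN : ¬ IsZero N) :
    ¬ IsZero (M ⊗ N) := by
  intro h
  -- the evaluation of M is nonzero
  have hεM : ε_ M Mᘁ ≠ 0 := by
    intro h0
    apply hM
    rw [IsZero.iff_id_eq_zero]
    have z := ExactPairing.evaluation_coevaluation M Mᘁ
    rw [h0, MonoidalPreadditive.whiskerLeft_zero, comp_zero, comp_zero] at z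
    calc 𝟙 M = (λ_ M).inv ≫ ((λ_ M).hom ≫ (ρ_ M).inv) ≫ (ρ_ M).hom := by simp
      _ = 0 := by rw [← z]; simp
  -- the composite (ε_M) ≫ (η_N) vanishes
  have hz : IsZero ((Mᘁ ⊗ M) ⊗ (N ⊗ Nᘁ)) := by
    have h1 : IsZero ((M ⊗ N) ⊗ Nᘁ) := isZero_tensor_of_isZero_left _ h
    have h2 : IsZero (Mᘁ ⊗ ((M ⊗ N) ⊗ Nᘁ)) := isZero_tensor_of_isZero_right _ h1
    exact h2.of_iso ((α_ Mᘁ M (N ⊗ Nᘁ)) ≪≫ whiskerLeftIso Mᘁ (α_ M N Nᘁ).symm)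
  have hcomp : ε_ M Mᘁ ≫ η_ N Nᘁ = 0 := by
    have hmid : (Mᘁ ⊗ M) ◁ η_ N Nᘁ = (0 : _ ⟶ (Mᘁ ⊗ M) ⊗ (N ⊗ Nᘁ)) := hz.eq_of_tgt _ 0
    have hfact : ε_ M Mᘁ ≫ η_ N Nᘁ =
        (ρ_ (Mᘁ ⊗ M)).inv ≫ ((Mᘁ ⊗ M) ◁ η_ N Nᘁ) ≫ (ε_ M Mᘁ ▷ (N ⊗ Nᘁ)) ≫
          (λ_ (N ⊗ Nᘁ)).hom := by
      rw [whisker_exchange_assoc]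
      rw [← rightUnitor_inv_naturality_assoc, leftUnitor_naturality]
      simp [unitors_equal]
    rw [hfact, hmid, zero_comp, comp_zero]
  -- the kernel of η_N and its cokernel
  have hu : kernel.lift _ (ε_ M Mᘁ) hcomp ≫ kernel.ι (η_ N Nᘁ) = ε_ M Mᘁ :=
    kernel.lift_ι _ _ _
  obtain ⟨S, hS⟩ := exists_section_cokernelπ (kernel.ι (η_ N Nᘁ))
  set q : 𝟙_ C ⟶ cokernel (kernel.ι (η_ N Nᘁ)) := cokernel.π (kernel.ι (η_ N Nᘁ)) with hqdef
  -- q ▷ N is an isomorphism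
  have hfac : η_ N Nᘁ = q ≫ Abelian.factorThruCoimage (η_ N Nᘁ) :=
    (Abelian.coimage.fac (η_ N Nᘁ)).symm
  have hsplitN : (q ▷ N) ≫
      ((Abelian.factorThruCoimage (η_ N Nᘁ) ▷ N) ≫ (α_ N Nᘁ N).hom ≫ N ◁ ε_ N Nᘁ ≫
        (ρ_ N).hom ≫ (λ_ N).inv) = 𝟙 (𝟙_ C ⊗ N) := by
    rw [← Category.assoc, ← comp_whiskerRight, ← hfac]
    rw [ExactPairing.evaluation_coevaluation_assoc]
    simp
  haveI : IsSplitMono (q ▷ N) := IsSplitMono.mk' ⟨_, hsplitN⟩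
  haveI : Epi (q ▷ N) := epi_whiskerRight' q N
  haveI hisoN : IsIso (q ▷ N) := isIso_of_mono_of_epi _
  -- the idempotent q ≫ S in the field End(𝟙)
  letI : Field (End (𝟙_ C)) := hC.toField
  set e : End (𝟙_ C) := q ≫ S with hedef
  have hee : e * e = e := by
    rw [End.mul_def]
    show (q ≫ S) ≫ q ≫ S = q ≫ S
    rw [← Category.assoc, Category.assoc q S q, hS, Category.comp_id]
  have hcases : e = 0 ∨ e = 1 := by
    have h2 : e * (e - 1) = 0 := by rw [mul_sub, hee, mul_one, sub_self]
    rcases mul_eq_zero.mp h2 with h' | h'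
    · exact Or.inl h'
    · exact Or.inr (by rwa [sub_eq_zero] at h')
  rcases hcases with h' | h'
  · -- e = 0 forces q = 0, contradicting that N is nonzero
    have hq0 : q = 0 := by
      have h3 : (q ≫ S) ≫ q = q := by rw [Category.assoc, hS, Category.comp_id]
      rw [← hedef, show e = (0 : End (𝟙_ C)) from h', zero_comp] at h3
      exact h3.symm
    apply hN
    have hid : 𝟙 (𝟙_ C ⊗ N) = 0 := by
      have hqN : q ▷ N = 0 := by rw [hq0, MonoidalPreadditive.zero_whiskerRight]
      rw [← cancel_mono (q ▷ N), Category.id_comp]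
      simp [hqN]
    exact ((IsZero.iff_id_eq_zero _).mpr hid).of_iso (λ_ N).symm
  · -- e = 1 forces kernel.ι (η_N) = 0, contradicting that ε_M ≠ 0
    have hq1 : q ≫ S = 𝟙 (𝟙_ C) := by rw [← End.one_def, ← h', hedef]
    haveI : IsSplitMono q := IsSplitMono.mk' ⟨S, hq1⟩
    have hu0 : kernel.ι (η_ N Nᘁ) = 0 := by
      rw [← cancel_mono q]
      rw [hqdef, cokernel.condition, zero_comp]
    exact hεM (by rw [← hu, hu0, comp_zero])
end

section
/- Let C be an abelian monoidal category whose tensor product is additive in each variable and right exact in each variable. Let n ≥ 1 and let M'_i →^{f_i} M_i →^{p_i} M''_i → 0, for i = 1, …, n, be exact sequences in C. Then the sequence ⨁_{k=1}^{n} (M_1 ⊗ ⋯ ⊗ M_{k-1} ⊗ M'_k ⊗ M_{k+1} ⊗ ⋯ ⊗ M_n) → M_1 ⊗ ⋯ ⊗ M_n →^{p_1 ⊗ ⋯ ⊗ p_n} M''_1 ⊗ ⋯ ⊗ M''_n → 0 is exact, where the k-th component of the first morphism is 𝟙 ⊗ ⋯ ⊗ f_k ⊗ ⋯ ⊗ 𝟙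 (with f_k in the k-th tensor factor and identities elsewhere). -/
/-!
Call `g : B ⟶ E` a joint cokernel of a family `u k : A k ⟶ B` when `g` kills every `u k` and
every morphism killing all `u k` factors uniquely through `g`; for a finite family this says
that `g` is the cokernel of the induced map `⨁ A k ⟶ B`. Since `X ⊗ -` and `- ⊗ X` preserve
cokernels, whiskering preserves joint cokernels. Hence if `g` is a joint cokernel of `(u k)` and
`h : X ⟶ Y` one of `(v l)`, then `g ⊗ h = (g ▷ X) ≫ (E ◁ h)` is a joint cokernel of the family
`(u k ▷ X, B ◁ v l)`: a morphism killing that family factors first through `g ▷ X` and then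
through `E ◁ h`. The theorem follows by induction on `n`, splitting off the last tensor factor.
-/

open CategoryTheory CategoryTheory.Limits MonoidalCategory

attribute [local instance] CategoryTheory.Abelian.hasFiniteBiproducts

variable {C : Type*} [Category C] [MonoidalCategory C]

/-- The iterated tensor product `M 0 ⊗ M 1 ⊗ ⋯ ⊗ M (n-1)` of a finite family of objects
(with the empty tensor product being the unit object). -/
def finTensorObj : ∀ {n : ℕ}, (Fin n → C) → C
  | 0, _ => 𝟙_ C
  | n + 1, M => finTensorObj (fun i => M i.castSucc) ⊗ M (Fin.last n)

/-- The iterated tensor product `f 0 ⊗ f 1 ⊗ ⋯ ⊗ f (n-1)` of a finite family of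
morphisms. -/
def finTensorHom : ∀ {n : ℕ} {A B : Fin n → C}, (∀ i, A i ⟶ B i) →
    (finTensorObj A ⟶ finTensorObj B)
  | 0, _, _, _ => 𝟙 (𝟙_ C)
  | n + 1, _, _, f => finTensorHom (fun i => f i.castSucc) ⊗ₘ f (Fin.last n)

/-- Given a family of morphisms `f i : A i ⟶ B i` and an index `k`, the family of
morphisms from the family `B` updated at `k` by `A k` back to `B`, which is `f k` in the
`k`-th spot and the identity elsewhere. -/
def updateHom {n : ℕ} {A B : Fin n → C} (f : ∀ i, A i ⟶ B i) (k i : Fin n) :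
    Function.update B k (A k) i ⟶ B i :=
  if h : i = k then
    eqToHom (show Function.update B k (A k) i = A i by subst h; simp) ≫ f i
  else eqToHom (by simp [Function.update_of_ne h])

lemma finTensorObj_succ {n : ℕ} (M : Fin (n + 1) → C) :
    finTensorObj M = finTensorObj (fun i => M i.castSucc) ⊗ M (Fin.last n) := rfl

lemma finTensorHom_succ {n : ℕ} {A B : Fin (n + 1) → C} (f : ∀ i, A i ⟶ B i) :
    finTensorHom f = finTensorHom (fun i => f i.castSucc) ⊗ₘ f (Fin.last n) := rfl

lemma finTensorHom_id : ∀ {n : ℕ} (A : Fin n → C),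
    finTensorHom (fun i => 𝟙 (A i)) = 𝟙 (finTensorObj A)
  | 0, _ => rfl
  | n + 1, A => by
    rw [finTensorHom_succ, finTensorHom_id (fun i => A i.castSucc)]
    exact id_tensorHom_id _ _

lemma finTensorHom_congr {n : ℕ} {A A' B : Fin n → C} (hA : A = A')
    (φ : ∀ i, A i ⟶ B i) (φ' : ∀ i, A' i ⟶ B i)
    (h : ∀ i, φ i = eqToHom (congrFun hA i) ≫ φ' i) :
    finTensorHom φ = eqToHom (congrArg finTensorObj hA) ≫ finTensorHom φ' := by
  subst hA
  simp only [eqToHom_refl, Category.id_comp] at h ⊢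
  exact congrArg _ (funext h)

section update

variable {n : ℕ} {M' M : Fin (n + 1) → C}

lemma finTensorObj_update_castSucc (j : Fin n) :
    finTensorObj (Function.update M j.castSucc (M' j.castSucc)) =
      finTensorObj (Function.update (fun i : Fin n => M i.castSucc) j (M' j.castSucc))
        ⊗ M (Fin.last n) := by
  rw [finTensorObj_succ, Function.update_of_ne (Fin.castSucc_lt_last j).ne']
  congr 2
  exact Function.update_comp_eq_of_injective M (Fin.castSucc_injective n) j _

lemma finTensorObj_update_last :
    finTensorObj (Function.update M (Fin.last n) (M' (Fin.last n))) =
      finTensorObj (fun i : Fin n => M i.castSucc) ⊗ M' (Fin.last n) := by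
  rw [finTensorObj_succ, Function.update_self]
  congr 2
  exact Function.update_comp_eq_of_forall_ne M _ (Fin.castSucc_lt_last · |>.ne)

lemma finTensorHom_updateHom_castSucc (f : ∀ i, M' i ⟶ M i) (j : Fin n) :
    finTensorHom (updateHom f j.castSucc) = eqToHom (finTensorObj_update_castSucc j) ≫
      (finTensorHom (updateHom (fun i => f i.castSucc) j) ▷ M (Fin.last n)) := by
  have hupd := Function.update_comp_eq_of_injective M (Fin.castSucc_injective n) j (M' j.castSucc)
  have hinit : finTensorHom (fun i : Fin n => updateHom f j.castSucc i.castSucc)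
      = eqToHom (congrArg finTensorObj hupd) ≫
        finTensorHom (updateHom (fun i => f i.castSucc) j) := by
    refine finTensorHom_congr hupd _ _ fun i => ?_
    rcases eq_or_ne i j with rfl | h
    · simp [updateHom]
    · simp [updateHom, h]
  have hlast : updateHom f j.castSucc (Fin.last n) =
      eqToHom (Function.update_of_ne (Fin.castSucc_lt_last j).ne' _ _) := by
    simp [updateHom, (Fin.castSucc_lt_last j).ne']
  rw [finTensorHom_succ, hinit, hlast]
  simp only [MonoidalCategory.tensorHom_def', whiskerLeft_eqToHom, comp_whiskerRight,
    eqToHom_whiskerRight, eqToHom_trans_assoc]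
  rfl

lemma finTensorHom_updateHom_last (f : ∀ i, M' i ⟶ M i) :
    finTensorHom (updateHom f (Fin.last n)) = eqToHom finTensorObj_update_last ≫
      (finTensorObj (fun i : Fin n => M i.castSucc) ◁ f (Fin.last n)) := by
  have hinit : finTensorHom (fun i : Fin n => updateHom f (Fin.last n) i.castSucc)
      = eqToHom _ ≫ finTensorHom (fun i : Fin n => 𝟙 (M i.castSucc)) :=
    finTensorHom_congr (Function.update_comp_eq_of_forall_ne M (M' (Fin.last n))
      (Fin.castSucc_lt_last · |>.ne)) _ _ fun i => by
        simp [updateHom, (Fin.castSucc_lt_last i).ne]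
  have hlast : updateHom f (Fin.last n) (Fin.last n) =
      eqToHom (Function.update_self _ _ _) ≫ f (Fin.last n) := by
    simp [updateHom]
  rw [finTensorHom_succ, hinit, finTensorHom_id, Category.comp_id, hlast]
  simp only [MonoidalCategory.tensorHom_def, eqToHom_whiskerRight, whiskerLeft_comp,
    whiskerLeft_eqToHom, eqToHom_trans_assoc]
  rfl

end update

section JointCokernel

variable {𝒜 : Type*} [Category 𝒜] [Preadditive 𝒜]

structure IsJointCokernel {ι : Type} {A : ι → 𝒜} {B E : 𝒜} (u : ∀ k, A k ⟶ B) (g : B ⟶ E) :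
    Prop where
  comp_eq_zero : ∀ k, u k ≫ g = 0
  epi : Epi g
  exists_fac : ∀ {T : 𝒜} (t : B ⟶ T), (∀ k, u k ≫ t = 0) → ∃ t', g ≫ t' = t

namespace IsJointCokernel

variable {ι : Type} {A : ι → 𝒜} {B E : 𝒜} {u : ∀ k, A k ⟶ B} {g : B ⟶ E}

lemma of_exact [Balanced 𝒜] {S : ShortComplex 𝒜} (hS : S.Exact) [Epi S.g] :
    IsJointCokernel (fun _ : Unit => S.f) S.g where
  comp_eq_zero _ := S.zero
  epi := inferInstance
  exists_fac t ht := ⟨_, (CokernelCofork.IsColimit.desc' hS.gIsCokernel t (ht ())).2⟩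

variable [Fintype ι] [HasFiniteBiproducts 𝒜]

lemma desc_comp_eq_zero (h : IsJointCokernel u g) : biproduct.desc u ≫ g = 0 :=
  biproduct.hom_ext' _ _ fun k => by simp [h.comp_eq_zero k]

noncomputable def isColimit (h : IsJointCokernel u g) :
    IsColimit (CokernelCofork.ofπ g h.desc_comp_eq_zero) :=
  have := h.epi
  CokernelCofork.IsColimit.ofπ' g _ fun t ht =>
    let fac := h.exists_fac t fun k => by rw [← biproduct.ι_desc u k, Category.assoc, ht, comp_zero]
    ⟨fac.choose, fac.choose_spec⟩

lemma map {ℬ : Type*} [Category ℬ] [Preadditive ℬ] (h : IsJointCokernel u g) (F : 𝒜 ⥤ ℬ)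
    [F.Additive] [PreservesColimit (parallelPair (biproduct.desc u) 0) F] :
    IsJointCokernel (fun k => F.map (u k)) (F.map g) := by
  have hc := isColimitCoforkMapOfIsColimit' F h.desc_comp_eq_zero h.isColimit
  refine ⟨fun k => by rw [← F.map_comp, h.comp_eq_zero k, F.map_zero],
    epi_of_isColimit_cofork hc, fun t ht => ?_⟩
  have hdesc : F.map (biproduct.desc u) ≫ t = 0 := by
    simp [biproduct.desc_eq, Preadditive.sum_comp, ht]
  exact ⟨_, (CokernelCofork.IsColimit.desc' hc t hdesc).2⟩

end IsJointCokernel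

end JointCokernel

section Monoidal

variable [Preadditive C] [MonoidalPreadditive C] [HasFiniteBiproducts C]

lemma IsJointCokernel.tensorHom {ι κ J : Type} [Fintype ι] [Fintype κ]
    {A : ι → C} {A' : κ → C} {D : J → C} {B E X Y : C}
    {u : ∀ k, A k ⟶ B} {v : ∀ l, A' l ⟶ X} {g : B ⟶ E} {h : X ⟶ Y}
    (hu : IsJointCokernel u g) (hv : IsJointCokernel v h)
    [∀ Z, PreservesColimit (parallelPair (biproduct.desc u) 0) (tensorRight Z)]
    [PreservesColimit (parallelPair (biproduct.desc v) 0) (tensorLeft E)]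
    (w : ∀ j, D j ⟶ B ⊗ X)
    (hw : ∀ {T : C} (t : B ⊗ X ⟶ T),
      (∀ j, w j ≫ t = 0) ↔ (∀ k, u k ▷ X ≫ t = 0) ∧ ∀ l, B ◁ v l ≫ t = 0) :
    IsJointCokernel w (g ⊗ₘ h) := by
  have hR (Z : C) : IsJointCokernel (fun k => u k ▷ Z) (g ▷ Z) := hu.map (tensorRight Z)
  have hL : IsJointCokernel (fun l => E ◁ v l) (E ◁ h) := hv.map (tensorLeft E)
  refine ⟨(hw _).2 ⟨fun k => ?_, fun l => ?_⟩, ?_, fun t ht => ?_⟩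
  · rw [MonoidalCategory.tensorHom_def, ← comp_whiskerRight_assoc, hu.comp_eq_zero,
      MonoidalPreadditive.zero_whiskerRight, zero_comp]
  · rw [MonoidalCategory.tensorHom_def', ← MonoidalCategory.whiskerLeft_comp_assoc,
      hv.comp_eq_zero, MonoidalPreadditive.whiskerLeft_zero, zero_comp]
  · have := (hR X).epi
    have := hL.epi
    rw [MonoidalCategory.tensorHom_def]
    exact epi_comp _ _
  · obtain ⟨hut, hvt⟩ := (hw t).1 ht
    obtain ⟨t₁, rfl⟩ := (hR X).exists_fac t hut
    -- `g ▷ A' l` is epi, and it intertwines `B ◁ v l` with `E ◁ v l`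
    have hvt₁ (l : κ) : E ◁ v l ≫ t₁ = 0 := by
      have := (hR (A' l)).epi
      refine zero_of_epi_comp (g ▷ A' l) ?_
      rw [← whisker_exchange_assoc]
      exact hvt l
    obtain ⟨t₂, rfl⟩ := hL.exists_fac t₁ hvt₁
    exact ⟨t₂, by rw [MonoidalCategory.tensorHom_def, Category.assoc]⟩

end Monoidal

theorem isJointCokernel_finTensorHom [Abelian C] [MonoidalPreadditive C]
    (hright : ∀ (X : C) ⦃A B : C⦄ (u : A ⟶ B),
      PreservesColimit (parallelPair u 0) (tensorLeft X) ∧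
      PreservesColimit (parallelPair u 0) (tensorRight X)) :
    ∀ {n : ℕ} {M' M M'' : Fin n → C} (f : ∀ i, M' i ⟶ M i) (p : ∀ i, M i ⟶ M'' i)
      (wi : ∀ i, f i ≫ p i = 0), (∀ i, (ShortComplex.mk (f i) (p i) (wi i)).Exact) →
      (∀ i, Epi (p i)) →
      IsJointCokernel (fun k => finTensorHom (updateHom f k)) (finTensorHom p)
  | 0, _, _, _, _, _, _, _, _ =>
    ⟨fun k => k.elim0, inferInstanceAs (Epi (𝟙 _)), fun t _ => ⟨t, Category.id_comp t⟩⟩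
  | n + 1, M', M, M'', f, p, wi, hex, hepi => by
    have hinit := isJointCokernel_finTensorHom hright (fun i => f i.castSucc)
      (fun i => p i.castSucc) (fun i => wi i.castSucc) (fun i => hex i.castSucc)
      (fun i => hepi i.castSucc)
    have := hepi (Fin.last n)
    have hlast := IsJointCokernel.of_exact (hex (Fin.last n))
    have := fun Z => (hright Z (biproduct.desc
      fun k => finTensorHom (updateHom (fun i => f i.castSucc) k))).2
    have := (hright (finTensorObj fun i => M'' i.castSucc)
      (biproduct.desc fun _ : Unit => f (Fin.last n))).1
    refine hinit.tensorHom hlast _ fun t => ?_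
    simp only [Fin.forall_fin_succ', finTensorHom_updateHom_castSucc, finTensorHom_updateHom_last,
      Category.assoc, Preadditive.IsIso.comp_left_eq_zero, forall_const]

theorem tensor_right_exact_many_general
    [Abelian C] [MonoidalPreadditive C]
    (hright : ∀ (X : C) ⦃A B : C⦄ (u : A ⟶ B),
      PreservesColimit (parallelPair u 0) (tensorLeft X) ∧
      PreservesColimit (parallelPair u 0) (tensorRight X))
    {n : ℕ}
    {M' M M'' : Fin n → C}
    (f : ∀ i, M' i ⟶ M i) (p : ∀ i, M i ⟶ M'' i)
    (wi : ∀ i, f i ≫ p i = 0)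
    (hex : ∀ i, (ShortComplex.mk (f i) (p i) (wi i)).Exact)
    (hepi : ∀ i, Epi (p i))
    (w : biproduct.desc (fun k => finTensorHom (updateHom f k)) ≫ finTensorHom p = 0) :
    Epi (finTensorHom p) ∧
    (ShortComplex.mk (biproduct.desc (fun k => finTensorHom (updateHom f k)))
      (finTensorHom p) w).Exact := by
  have h := isJointCokernel_finTensorHom hright f p wi hex hepi
  exact ⟨h.epi, ShortComplex.exact_of_g_is_cokernel _ h.isColimit⟩

/-- **Key step in Proposition p4 of Kahn, "Exactness and faithfulness of monoidal
functors"**. In an abelian monoidal category with biadditive, right exact tensor product,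
given exact sequences `M'_i → M_i → M''_i → 0` for `i = 1, …, n`, the sequence
`⨁ₖ (M_1 ⊗ ⋯ ⊗ M'_k ⊗ ⋯ ⊗ M_n) → M_1 ⊗ ⋯ ⊗ M_n → M''_1 ⊗ ⋯ ⊗ M''_n → 0` is exact,
where the `k`-th component of the first morphism is `𝟙 ⊗ ⋯ ⊗ f_k ⊗ ⋯ ⊗ 𝟙`. -/
theorem tensor_right_exact_many
    [Abelian C] [MonoidalPreadditive C]
    (hright : ∀ (X : C) ⦃A B : C⦄ (u : A ⟶ B),
      PreservesColimit (parallelPair u 0) (tensorLeft X) ∧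
      PreservesColimit (parallelPair u 0) (tensorRight X))
    {n : ℕ} (hn : 1 ≤ n)
    {M' M M'' : Fin n → C}
    (f : ∀ i, M' i ⟶ M i) (p : ∀ i, M i ⟶ M'' i)
    (wi : ∀ i, f i ≫ p i = 0)
    (hex : ∀ i, (ShortComplex.mk (f i) (p i) (wi i)).Exact)
    (hepi : ∀ i, Epi (p i))
    (w : biproduct.desc (fun k => finTensorHom (updateHom f k)) ≫ finTensorHom p = 0) :
    Epi (finTensorHom p) ∧
    (ShortComplex.mk (biproduct.desc (fun k => finTensorHom (updateHom f k)))
      (finTensorHom p) w).Exact :=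
  tensor_right_exact_many_general hright f p wi hex hepi w
end
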